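/- For θ ∈ (0, π/4], c ∈ (0,1), λ ∈ (0,2], define ρ(θ,c,λ) as the largest root modulus of ρ² - (λc·cos 2θ - λ + 2)ρ + (c·sin²θ·λ² - (1 - c·cos 2θ)λ + 1) = 0. Then the minimizer over λ is λ*(θ,c) = 2 if c ≤ 1/(2 - cos 2θ), and λ*(θ,c) = (1/c - cos 2θ)/(1 - cos 2θ) if c ≥ 1/(2 - cos 2θ); λ* is continuous and non-increasing in c with range (1,2] for c ∈ (0,1). -/

import Mathlib

/-!
Write `d = cos 2θ ∈ [0, 1)` and `K = c²d² - 2c + 1`, so that the discriminant of the quadratic is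
`λ²K`. If `K ≥ 0` the roots are real and `ρ = 1 - λ(1 - cd - √K)/2` decreases in `λ`, and
`K ≥ 0` forces `c(2 - d) ≤ 1`, i.e. `λ* = 2`. If `K < 0` the roots are conjugate and `ρ² = C(λ)`
is the constant coefficient, a convex quadratic in `λ` with vertex `(1/c - d)/(1 - d)`; its
minimum over `(0, 2]` sits at `min 2 ((1/c - d)/(1 - d))`, which is `λ*`. The properties of `λ*`
in `c` are read off the same `min` formula.
-/

open Real

/-- The optimal relaxation parameter `λ*(θ,c)` for generalized Douglas–Rachford. -/
noncomputable def lamStar (θ c : ℝ) : ℝ :=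
  if c ≤ 1 / (2 - Real.cos (2 * θ)) then 2
  else (1 / c - Real.cos (2 * θ)) / (1 - Real.cos (2 * θ))

open Set

def quadRootNorms (B C : ℝ) : Set ℝ :=
  {r | ∃ z : ℂ, z ^ 2 - (B : ℂ) * z + (C : ℂ) = 0 ∧ r = ‖z‖}

lemma quadRootNorms_eq_pair {B C : ℝ} {z₁ z₂ : ℂ} (hsum : z₁ + z₂ = B) (hprod : z₁ * z₂ = C) :
    quadRootNorms B C = {‖z₁‖, ‖z₂‖} := by
  ext r
  constructor
  · rintro ⟨z, hz, rfl⟩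
    have hfactor : (z - z₁) * (z - z₂) = 0 := by linear_combination hz - z * hsum + hprod
    rcases mul_eq_zero.1 hfactor with h | h
    · exact Or.inl (by rw [sub_eq_zero.1 h])
    · exact Or.inr (by rw [sub_eq_zero.1 h]; rfl)
  · rintro (rfl | rfl)
    · exact ⟨z₁, by linear_combination z₁ * hsum - hprod, rfl⟩
    · exact ⟨z₂, by linear_combination z₂ * hsum - hprod, rfl⟩

lemma isGreatest_quadRootNorms_of_discrim_nonneg {B C : ℝ} (hB : 0 ≤ B)
    (hΔ : 0 ≤ B ^ 2 - 4 * C) :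
    IsGreatest (quadRootNorms B C) ((B + √(B ^ 2 - 4 * C)) / 2) := by
  set u := √(B ^ 2 - 4 * C)
  have hu : 0 ≤ u := sqrt_nonneg _
  have hu2 : u ^ 2 = B ^ 2 - 4 * C := sq_sqrt hΔ
  have hpair := quadRootNorms_eq_pair (B := B) (C := C) (z₁ := ((B + u) / 2 : ℝ))
    (z₂ := ((B - u) / 2 : ℝ)) (by push_cast; ring)
    (by
      have hu2' : (u : ℂ) ^ 2 = B ^ 2 - 4 * C := by exact_mod_cast hu2
      push_cast
      linear_combination (-1 / 4 : ℂ) * hu2')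
  rw [hpair, Complex.norm_real, Complex.norm_real, norm_of_nonneg (by positivity)]
  have hmax : max ((B + u) / 2) ‖(B - u) / 2‖ = (B + u) / 2 :=
    max_eq_left (abs_le.2 ⟨by linarith, by linarith⟩)
  simpa only [hmax] using isGreatest_pair (a := (B + u) / 2) (b := ‖(B - u) / 2‖)

lemma isGreatest_quadRootNorms_of_discrim_neg {B C : ℝ} (hΔ : B ^ 2 - 4 * C < 0) :
    IsGreatest (quadRootNorms B C) (√C) := by
  set z : ℂ := ⟨B / 2, √(4 * C - B ^ 2) / 2⟩
  have hnormSq : Complex.normSq z = C := by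
    simp only [z, Complex.normSq_mk]
    nlinarith [sq_sqrt (by linarith : 0 ≤ 4 * C - B ^ 2)]
  have hpair := quadRootNorms_eq_pair (B := B) (z₁ := z) (z₂ := (starRingEnd ℂ) z)
    (by rw [Complex.add_conj]; push_cast [z]; ring) (by rw [Complex.mul_conj, hnormSq])
  rw [hpair, Complex.norm_conj, pair_eq_singleton, Complex.norm_def, hnormSq]
  exact isGreatest_singleton

section lamStar

variable {θ : ℝ}

lemma lamStar_eq_min (hd : cos (2 * θ) < 1) {c : ℝ} (hc : 0 < c) :
    lamStar θ c = min 2 ((1 / c - cos (2 * θ)) / (1 - cos (2 * θ))) := by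
  set d := cos (2 * θ)
  have hthreshold : c ≤ 1 / (2 - d) ↔ 2 ≤ (1 / c - d) / (1 - d) := by
    rw [le_one_div hc (by linarith)]
    constructor <;> intro h
    · exact (le_div_iff₀ (by linarith)).2 (by linarith)
    · linarith [(le_div_iff₀ (by linarith)).1 h]
  unfold lamStar
  split_ifs with h
  · exact (min_eq_left (hthreshold.1 h)).symm
  · exact (min_eq_right (le_of_not_ge (mt hthreshold.2 h))).symm

lemma lamStar_mem_Ioc (hd : cos (2 * θ) < 1) {c : ℝ} (hc : c ∈ Ioo 0 1) :
    lamStar θ c ∈ Ioc 1 2 := by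
  rw [lamStar_eq_min hd hc.1]
  have : 1 < 1 / c := by rw [lt_div_iff₀ hc.1]; linarith [hc.2]
  exact ⟨lt_min one_lt_two (by rw [lt_div_iff₀ (by linarith)]; linarith), min_le_left _ _⟩

lemma antitoneOn_lamStar (hd : cos (2 * θ) < 1) : AntitoneOn (lamStar θ) (Ioi 0) := by
  intro a ha b hb hab
  rw [lamStar_eq_min hd ha, lamStar_eq_min hd hb]
  gcongr

lemma continuousOn_lamStar (hd : cos (2 * θ) < 1) : ContinuousOn (lamStar θ) (Ioi 0) := by
  refine ContinuousOn.congr ?_ fun x hx => lamStar_eq_min hd (mem_Ioi.1 hx)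
  fun_prop (disch := simp_all [ne_of_gt])

lemma lamStar_image_Ioo (hd : cos (2 * θ) < 1) : lamStar θ '' Ioo 0 1 = Ioc 1 2 := by
  refine Subset.antisymm (image_subset_iff.2 fun c hc => lamStar_mem_Ioc hd hc) ?_
  rintro y ⟨hy1, hy2⟩
  set d := cos (2 * θ)
  have hpos : 1 < y * (1 - d) + d := by nlinarith
  refine ⟨1 / (y * (1 - d) + d), ⟨by positivity, (div_lt_one (by linarith)).2 hpos⟩, ?_⟩
  rw [lamStar_eq_min hd (by positivity), one_div_one_div, add_sub_cancel_right,
    mul_div_cancel_right₀ _ (by linarith), min_eq_right hy2]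

end lamStar

lemma sq_min_sub_le {m v x : ℝ} (hx : x ≤ m) : (min m v - v) ^ 2 ≤ (x - v) ^ 2 := by
  rcases min_cases m v with ⟨h, hmv⟩ | ⟨h, -⟩
  · rw [h]; nlinarith
  · rw [h, sub_self, sq, zero_mul]; positivity

section rate

variable {θ c : ℝ}

/-- The paper's `ρ(θ, c, λ)` in closed form. -/
noncomputable def drRate (θ c lam : ℝ) : ℝ :=
  if 0 ≤ c ^ 2 * cos (2 * θ) ^ 2 - 2 * c + 1 then
    (lam * c * cos (2 * θ) - lam + 2 + lam * √(c ^ 2 * cos (2 * θ) ^ 2 - 2 * c + 1)) / 2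
  else √(c * sin θ ^ 2 * lam ^ 2 - (1 - c * cos (2 * θ)) * lam + 1)

lemma isGreatest_drRate (hd : 0 ≤ cos (2 * θ)) (hc : 0 ≤ c) {lam : ℝ} (hlam : lam ∈ Ioc 0 2) :
    IsGreatest (quadRootNorms (lam * c * cos (2 * θ) - lam + 2)
      (c * sin θ ^ 2 * lam ^ 2 - (1 - c * cos (2 * θ)) * lam + 1)) (drRate θ c lam) := by
  unfold drRate
  set K := c ^ 2 * cos (2 * θ) ^ 2 - 2 * c + 1
  set B := lam * c * cos (2 * θ) - lam + 2
  set C := c * sin θ ^ 2 * lam ^ 2 - (1 - c * cos (2 * θ)) * lam + 1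
  have hdiscrim : B ^ 2 - 4 * C = lam ^ 2 * K := by
    simp only [B, C, K]; rw [sin_sq_eq_half_sub]; ring
  split_ifs with hK
  · have hB : 0 ≤ B := by nlinarith [hlam.1, hlam.2, mul_nonneg hc hd]
    convert isGreatest_quadRootNorms_of_discrim_nonneg hB (by rw [hdiscrim]; positivity) using 2
    rw [hdiscrim, sqrt_mul (sq_nonneg _), sqrt_sq hlam.1.le]
  · refine isGreatest_quadRootNorms_of_discrim_neg ?_
    rw [hdiscrim]
    exact mul_neg_of_pos_of_neg (pow_pos hlam.1 2) (not_le.1 hK)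

lemma lamStar_eq_two_of_discrim_nonneg (hd : cos (2 * θ) ∈ Ico 0 1) (hc : c ∈ Ioo 0 1)
    (hK : 0 ≤ c ^ 2 * cos (2 * θ) ^ 2 - 2 * c + 1) : lamStar θ c = 2 := by
  have hcd : c * (2 - cos (2 * θ)) ≤ 1 := by
    nlinarith [hc.1, hc.2, hd.1, hd.2, mul_nonneg hc.1.le hd.1]
  rw [lamStar, if_pos ((le_div_iff₀ (by linarith [hd.2])).2 (by linarith))]

lemma drRate_lamStar_le (hd : cos (2 * θ) ∈ Ico 0 1) (hc : c ∈ Ioo 0 1) {lam : ℝ}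
    (hlam : lam ≤ 2) : drRate θ c (lamStar θ c) ≤ drRate θ c lam := by
  unfold drRate
  set d := cos (2 * θ) with hd_def
  split_ifs with hK
  · have hsqrtK : √(c ^ 2 * d ^ 2 - 2 * c + 1) ≤ 1 - c * d :=
      sqrt_le_iff.2 ⟨by nlinarith [hc.1, hc.2, hd.1, hd.2], by nlinarith [hc.1, hd.2]⟩
    rw [lamStar_eq_two_of_discrim_nonneg hd hc hK]
    nlinarith
  · set lam₀ := (1 / c - d) / (1 - d)
    have hvertex : 2 * (c * sin θ ^ 2) * lam₀ = 1 - c * d := by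
      rw [sin_sq_eq_half_sub, ← hd_def]
      simp only [lam₀]
      field_simp [hc.1.ne', (sub_pos.2 hd.2).ne']
    have hcomplete : ∀ x, c * sin θ ^ 2 * x ^ 2 - (1 - c * d) * x + 1
        = c * sin θ ^ 2 * (x - lam₀) ^ 2 + (1 - c * sin θ ^ 2 * lam₀ ^ 2) := fun x => by
      rw [← hvertex]; ring
    apply sqrt_le_sqrt
    rw [hcomplete, hcomplete, lamStar_eq_min hd.2 hc.1]
    gcongr ?_ * ?_ + _
    · exact mul_nonneg hc.1.le (sq_nonneg _)
    · exact sq_min_sub_le hlam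

end rate

lemma cos_two_mul_mem_Ico {θ : ℝ} (hθ : θ ∈ Ioc 0 (π / 4)) : cos (2 * θ) ∈ Ico 0 1 := by
  have hsin : 0 < sin θ := sin_pos_of_pos_of_lt_pi hθ.1 (by linarith [hθ.2, pi_pos])
  refine ⟨cos_nonneg_of_mem_Icc ⟨by linarith [hθ.1, pi_pos], by linarith [hθ.2]⟩, ?_⟩
  nlinarith [sin_sq_eq_half_sub θ]

/-- Let `ρ(θ,c,λ)` be the largest root modulus of
`ρ² - (λc·cos 2θ - λ + 2)ρ + (c·sin²θ·λ² - (1 - c·cos 2θ)λ + 1) = 0`. Then the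
minimizer of `λ ↦ ρ(θ,c,λ)` over `(0,2]` is `λ*(θ,c)` (equal to `2` for
`c ≤ 1/(2 - cos 2θ)` and to `(1/c - cos 2θ)/(1 - cos 2θ)` otherwise); moreover
`λ*(θ,·)` is continuous and non-increasing on `(0,1)` with range `(1,2]`. -/
theorem stmt18 (θ c : ℝ) (hθ : θ ∈ Set.Ioc 0 (π / 4)) (hc : c ∈ Set.Ioo (0:ℝ) 1)
    (ρ : ℝ → ℝ)
    (hρ : ∀ lam ∈ Set.Ioc (0:ℝ) 2,
      IsGreatest {r : ℝ | ∃ z : ℂ,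
        z ^ 2 - ((lam * c * Real.cos (2 * θ) - lam + 2 : ℝ) : ℂ) * z
          + ((c * Real.sin θ ^ 2 * lam ^ 2 - (1 - c * Real.cos (2 * θ)) * lam + 1 : ℝ) : ℂ) = 0 ∧
        r = ‖z‖} (ρ lam)) :
    (∀ lam ∈ Set.Ioc (0:ℝ) 2, ρ (lamStar θ c) ≤ ρ lam) ∧
    lamStar θ c ∈ Set.Ioc (1:ℝ) 2 ∧
    AntitoneOn (lamStar θ) (Set.Ioo 0 1) ∧
    ContinuousOn (lamStar θ) (Set.Ioo 0 1) ∧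
    (lamStar θ) '' (Set.Ioo 0 1) = Set.Ioc 1 2 := by
  have hd := cos_two_mul_mem_Ico hθ
  have hρ_eq : ∀ lam ∈ Ioc (0 : ℝ) 2, ρ lam = drRate θ c lam := fun lam hlam =>
    (hρ lam hlam).unique (isGreatest_drRate hd.1 hc.1.le hlam)
  have hstar := lamStar_mem_Ioc hd.2 hc
  refine ⟨fun lam hlam => ?_, hstar, (antitoneOn_lamStar hd.2).mono Ioo_subset_Ioi_self,
    (continuousOn_lamStar hd.2).mono Ioo_subset_Ioi_self, lamStar_image_Ioo hd.2⟩
  rw [hρ_eq _ ⟨zero_lt_one.trans hstar.1, hstar.2⟩, hρ_eq lam hlam]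
  exact drRate_lamStar_le hd hc hlam.2
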